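/- Let U be a chain code such that every prefix P of U satisfies qturn(P) ∈ {-1, 0, 1}, and suppose qturn(U) = 0. Then the unfolding dual path of U can be partitioned into maximal segments between consecutive prefixes of qturn 0, and within each such segment the chain code is of one of the forms: S, R S^k L, or L S^k R for some k ≥ 0. -/
import Mathlib


inductive TurnSym : Type
  | L | R | S
deriving DecidableEq

def qt : TurnSym → ℤ
  | TurnSym.L => -1
  | TurnSym.R => 1
  | TurnSym.S => 0

def qturn (U : List TurnSym) : ℤ := (U.map qt).sum

def rot : TurnSym → ℤ × ℤ → ℤ × ℤ
  | TurnSym.R, d => (d.2, -d.1)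
  | TurnSym.L, d => (-d.2, d.1)
  | TurnSym.S, d => d

def pathStep (s : (ℤ × ℤ) × (ℤ × ℤ)) (a : TurnSym) : (ℤ × ℤ) × (ℤ × ℤ) :=
  let d := rot a s.2
  (s.1 + d, d)

/-- Points p_0 = (0,0), p_1 = (0,1), ..., p_{n+1} of the unfolding dual path. -/
def pts (U : List TurnSym) : List (ℤ × ℤ) :=
  (0, 0) :: (List.scanl pathStep ((0, 1), (0, 1)) U).map Prod.fst

/-- 90° clockwise rotation. -/
def cw (d : ℤ × ℤ) : ℤ × ℤ := (d.2, -d.1)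

/-- Final heading after processing a chain code from initial heading (0,1). -/
def headAfter (U : List TurnSym) : ℤ × ℤ := U.foldl (fun d a => rot a d) (0, 1)

/-- Reflection of a chain code: swap L and R. -/
def reflCode (U : List TurnSym) : List TurnSym :=
  U.map fun a => match a with
    | TurnSym.L => TurnSym.R
    | TurnSym.R => TurnSym.L
    | TurnSym.S => TurnSym.S

/-- Action of a chain code on an arbitrary initial heading. -/
def act (U : List TurnSym) (d : ℤ × ℤ) : ℤ × ℤ := U.foldl (fun d a => rot a d) d

lemma qturn_append (a b : List TurnSym) : qturn (a ++ b) = qturn a + qturn b := by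
  simp [qturn]

lemma qturn_cons (a : TurnSym) (l : List TurnSym) : qturn (a :: l) = qt a + qturn l := by
  simp [qturn]

lemma allS : ∀ T : List TurnSym, (∀ Q, Q <+: T → qturn Q = 0) →
    T = List.replicate T.length TurnSym.S := by
  intro T
  induction T with
  | nil => simp
  | cons b T ih =>
    intro h
    have hb : qt b = 0 := by
      have := h [b] ⟨T, rfl⟩
      simpa [qturn] using this
    have hbS : b = TurnSym.S := by cases b <;> simp_all [qt]
    have hT : T = List.replicate T.length TurnSym.S := by
      apply ih
      intro Q hQ
      obtain ⟨t, rfl⟩ := hQ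
      have h2 : qturn (b :: Q) = 0 := by
        have := h (b :: Q) ⟨t, by simp⟩
        exact this
      rw [qturn_cons, hb] at h2
      simpa using h2
    subst hbS
    simpa [List.replicate_succ] using hT

lemma seg (T : List TurnSym) (hC : ∀ Q, Q <+: T → Q ≠ T → qturn Q = 0)
    (e : ℤ) (he : qturn T = e) (hne : e ≠ 0) :
    ∃ c, T = List.replicate (T.length - 1) TurnSym.S ++ [c] ∧ qt c = e := by
  rcases List.eq_nil_or_concat T with hT | ⟨init, last, hT⟩
  · subst hT; simp [qturn] at he; omega
  · rw [List.concat_eq_append] at hT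
    subst hT
    have hinit0 : ∀ Q, Q <+: init → qturn Q = 0 := by
      intro Q hQ
      refine hC Q (hQ.trans ⟨[last], rfl⟩) ?_
      intro h
      have h1 := hQ.length_le
      have h2 := congrArg List.length h
      simp at h2; omega
    have hrep := allS init hinit0
    have hlast : qt last = e := by
      have h3 := hinit0 init (List.prefix_refl _)
      rw [qturn_append, h3, zero_add] at he
      simpa [qturn] using he
    refine ⟨last, ?_, hlast⟩
    have hlen : (init ++ [last]).length - 1 = init.length := by simp
    rw [hlen, ← hrep]

theorem stmt4 (U : List TurnSym)
    (hpre : ∀ P, P <+: U → qturn P ∈ ({-1, 0, 1} : Set ℤ))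
    (h0 : qturn U = 0)
    (P' P'' W : List TurnSym)
    (hcat : P' ++ W = P'') (hP'' : P'' <+: U)
    (hq' : qturn P' = 0) (hq'' : qturn P'' = 0)
    (hW : W ≠ [])
    (hmax : ∀ Q, Q <+: U → qturn Q = 0 → P' <+: Q → Q <+: P'' → Q = P' ∨ Q = P'') :
    W = [TurnSym.S] ∨
    (∃ k, W = TurnSym.R :: (List.replicate k TurnSym.S ++ [TurnSym.L])) ∨
    (∃ k, W = TurnSym.L :: (List.replicate k TurnSym.S ++ [TurnSym.R])) := by
  subst hcat
  have hqW : qturn W = 0 := by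
    rw [qturn_append, hq', zero_add] at hq''; exact hq''
  have A : ∀ Q, Q <+: W → Q ≠ [] → Q ≠ W → qturn Q ≠ 0 := by
    intro Q hQ hne hneW hq0
    obtain ⟨t, rfl⟩ := hQ
    have h1 : P' ++ Q <+: U := List.IsPrefix.trans ⟨t, by simp⟩ hP''
    have h2 : qturn (P' ++ Q) = 0 := by simp [qturn_append, hq', hq0]
    rcases hmax (P' ++ Q) h1 h2 ⟨Q, rfl⟩ ⟨t, by simp⟩ with h | h
    · exact hne (by simpa using congrArg (List.drop P'.length) h)
    · exact hneW (by simpa using congrArg (List.drop P'.length) h)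
  have B : ∀ Q, Q <+: W → qturn Q ∈ ({-1, 0, 1} : Set ℤ) := by
    intro Q hQ
    have h1 : P' ++ Q <+: U := by
      obtain ⟨t, rfl⟩ := hQ
      exact List.IsPrefix.trans ⟨t, by simp⟩ hP''
    have := hpre (P' ++ Q) h1
    rwa [qturn_append, hq', zero_add] at this
  clear hmax hpre hP'' hq' hq'' h0
  cases W with
  | nil => exact absurd rfl hW
  | cons a T =>
    have hC : a ≠ TurnSym.S → ∀ Q, Q <+: T → Q ≠ T → qturn Q = 0 := by
      intro haS Q
      induction Q using List.reverseRecOn with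
      | nil => intro _ _; simp [qturn]
      | append_singleton Q' b ih =>
        intro hpre hne
        have hQ'T : Q' <+: T := List.IsPrefix.trans ⟨[b], rfl⟩ hpre
        have hQ'ne : Q' ≠ T := by
          rintro rfl
          have := hpre.length_le
          simp at this
        have hQ0 : qturn Q' = 0 := ih hQ'T hQ'ne
        have hpW : (a :: (Q' ++ [b])) <+: a :: T := by
          obtain ⟨t, rfl⟩ := hpre; exact ⟨t, by simp⟩
        have hA := A _ hpW (by simp) (by intro h; exact hne (by injection h))
        have hB := B _ hpW
        rw [qturn_cons, qturn_append, hQ0, zero_add] at hA hB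
        rw [qturn_append, hQ0, zero_add]
        cases a <;> cases b <;>
          simp_all [qturn, qt, Set.mem_insert_iff, Set.mem_singleton_iff]
    have hsingle : T = [] → a = TurnSym.S := by
      rintro rfl
      have : qt a = 0 := by simpa [qturn] using hqW
      cases a <;> simp_all [qt]
    rcases eq_or_ne T [] with rfl | hTne
    · left; rw [hsingle rfl]
    · have haS : a ≠ TurnSym.S := by
        rintro rfl
        exact A [TurnSym.S] ⟨T, rfl⟩ (by simp)
          (fun h => hTne ((List.cons.injEq _ _ _ _).mp h).2.symm)
          (by simp [qturn, qt])
      have hqT : qturn T = -qt a := by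
        rw [qturn_cons] at hqW; omega
      obtain ⟨c, hTc, hc⟩ := seg T (hC haS) (-qt a) hqT
        (by cases a <;> simp_all [qt])
      cases a with
      | S => exact absurd rfl haS
      | R =>
        have hcL : c = TurnSym.L := by
          cases c with
          | L => rfl
          | R => simp [qt] at hc
          | S => simp [qt] at hc
        rw [hcL] at hTc
        exact Or.inr (Or.inl ⟨T.length - 1, congrArg _ hTc⟩)
      | L =>
        have hcR : c = TurnSym.R := by
          cases c with
          | R => rfl
          | L => simp [qt] at hc
          | S => simp [qt] at hc
        rw [hcR] at hTc
        exact Or.inr (Or.inr ⟨T.length - 1, congrArg _ hTc⟩)
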